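/- arXiv:2001.00271 — 2 statements merged into one kernel-verified Lean document; each statement's English description precedes it below -/
import Mathlib

section
/- Consider a finite MDP with options in which the interest function is parameterized: I : ℝ × S × Ω → ℝ, written I_z(s,ω), with z ↦ I_z(s,ω) differentiable for every (s,ω), I_z(s,ω) ≥ 0, and Σ_ω I_z(s,ω) π_Ω(ω|s) > 0 for every s and z; write π_{I_z} for the resulting interest policy over options and Q_Ω^z for the corresponding option-value function over options. Then the derivative of the option-value function with respect to z satisfies the recursive (one-step expansion) identity: ∂Q_Ω^z(s,ω)/∂z = g_z(s,ω) + γ Σ_{(s',ω')} P₁^z((s',ω')|(s,ω)) ∂Q_Ω^z(s',ω')/∂z, where g_z(s,ω) = γ Σ_a π_ω(a|s) Σ_{s'} P(s'|s,a) β_ω(s') Σ_{ω'} (∂π_{I_z}(ω'|s')/∂z) Q_Ω^z(s',ω') and P₁^z((s',ω')|(s,ω)) = Σ_a π_ω(a|s) P(s'|s,a) [ (1−β_ω(s')) 1{ω'=ω} + β_ω(s') π_{I_z}(ω'|s') ] is the augmented transition kernel over state-option pairs. -/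
/-!
Composing the two Bellman equations, `Q_Ω^z` is the fixed point of `q ↦ b + γ P₁^z q` on
state–option pairs. As `P₁^z` is stochastic and `γ < 1`, the matrix `1 - γ P₁^z` is invertible,
so by Cramer's rule `Q_Ω^z = (1 - γ P₁^z)⁻¹ b` is differentiable in `z`. Differentiating the
fixed-point equation by the product rule gives the expansion: `P₁^z` is affine in `π_{I_z}`, and
its derivative only retains the termination term, which is what produces `g_z`.
-/

open Finset Matrix

namespace Matrix

section Stochastic

variable {n : Type*} [Fintype n] [DecidableEq n] {M : Matrix n n ℝ}

theorem norm_mulVec_le_of_mem_rowStochastic (hM : M ∈ rowStochastic ℝ n) (v : n → ℝ) :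
    ‖M *ᵥ v‖ ≤ ‖v‖ := by
  refine (pi_norm_le_iff_of_nonneg (norm_nonneg v)).2 fun i => ?_
  calc ‖(M *ᵥ v) i‖ ≤ ∑ j, M i j * ‖v‖ := by
        refine (norm_sum_le _ _).trans (sum_le_sum fun j _ => ?_)
        rw [norm_mul, Real.norm_of_nonneg (nonneg_of_mem_rowStochastic hM)]
        exact mul_le_mul_of_nonneg_left (norm_le_pi_norm v j) (nonneg_of_mem_rowStochastic hM)
    _ = ‖v‖ := by rw [← sum_mul, sum_row_of_mem_rowStochastic hM, one_mul]

/-- A discounted stochastic matrix is a strict contraction in the sup norm, so `1 - γ M`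
has trivial kernel. -/
theorem det_one_sub_smul_ne_zero_of_mem_rowStochastic (hM : M ∈ rowStochastic ℝ n) {γ : ℝ}
    (hγ : |γ| < 1) : (1 - γ • M).det ≠ 0 := by
  intro hdet
  obtain ⟨v, hv, hker⟩ := exists_mulVec_eq_zero_iff.2 hdet
  have hfix : v = γ • (M *ᵥ v) := by
    rwa [sub_mulVec, one_mulVec, smul_mulVec, sub_eq_zero] at hker
  have hle : ‖v‖ ≤ |γ| * ‖v‖ :=
    calc ‖v‖ = |γ| * ‖M *ᵥ v‖ := by
          conv_lhs => rw [hfix]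
          rw [norm_smul, Real.norm_eq_abs]
      _ ≤ |γ| * ‖v‖ := by gcongr; exact norm_mulVec_le_of_mem_rowStochastic hM v
  exact hv (norm_le_zero_iff.1 (by nlinarith [norm_nonneg v]))

end Stochastic

section Calculus

variable {𝕜 : Type*} [NontriviallyNormedField 𝕜] {m n : Type*} [Fintype n]

theorem differentiable_det {M : 𝕜 → Matrix n n 𝕜} [DecidableEq n]
    (hM : ∀ i j, Differentiable 𝕜 fun z => M z i j) :
    Differentiable 𝕜 fun z => (M z).det := by
  simp only [det_apply, Units.smul_def, zsmul_eq_mul]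
  exact Differentiable.fun_sum fun σ _ =>
    (Differentiable.fun_finsetProd fun i _ => hM (σ i) i).const_mul _

theorem differentiable_adjugate_apply [DecidableEq n] {M : 𝕜 → Matrix n n 𝕜}
    (hM : ∀ i j, Differentiable 𝕜 fun z => M z i j) (i j : n) :
    Differentiable 𝕜 fun z => (M z).adjugate i j := by
  simp only [adjugate_apply]
  refine differentiable_det fun k l => ?_
  by_cases hk : k = j <;> simp [updateRow_apply, hk, hM]

theorem differentiable_inv_apply [DecidableEq n] {M : 𝕜 → Matrix n n 𝕜}
    (hM : ∀ i j, Differentiable 𝕜 fun z => M z i j) (hdet : ∀ z, (M z).det ≠ 0) (i j : n) :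
    Differentiable 𝕜 fun z => (M z)⁻¹ i j := by
  simp only [inv_def, Ring.inverse_eq_inv', smul_apply, smul_eq_mul]
  exact ((differentiable_det hM).inv hdet).mul (differentiable_adjugate_apply hM i j)

theorem differentiable_of_mulVec_eq [DecidableEq n] {M : 𝕜 → Matrix n n 𝕜} {v : 𝕜 → n → 𝕜}
    {b : n → 𝕜} (hM : ∀ i j, Differentiable 𝕜 fun z => M z i j) (hdet : ∀ z, (M z).det ≠ 0)
    (hv : ∀ z, M z *ᵥ v z = b) (i : n) :
    Differentiable 𝕜 fun z => v z i := by
  have hsol : ∀ z, v z = (M z)⁻¹ *ᵥ b := fun z => by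
    rw [← hv z, mulVec_mulVec, nonsing_inv_mul _ (isUnit_iff_ne_zero.2 (hdet z)), one_mulVec]
  simp only [hsol, mulVec, dotProduct]
  exact Differentiable.fun_sum fun j _ => (differentiable_inv_apply hM hdet i j).mul_const _

theorem hasDerivAt_mulVec_apply {M : 𝕜 → Matrix m n 𝕜} {M' : Matrix m n 𝕜} {v : 𝕜 → n → 𝕜}
    {v' : n → 𝕜} {z : 𝕜} (hM : ∀ i j, HasDerivAt (fun z => M z i j) (M' i j) z)
    (hv : ∀ j, HasDerivAt (fun z => v z j) (v' j) z) (i : m) :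
    HasDerivAt (fun z => (M z *ᵥ v z) i) ((M' *ᵥ v z) i + (M z *ᵥ v') i) z := by
  simp only [mulVec, dotProduct, ← sum_add_distrib]
  exact HasDerivAt.fun_sum fun j _ => (hM i j).mul (hv j)

end Calculus

section DiscountedFixedPoint

variable {n : Type*} [Fintype n] [DecidableEq n] {K : ℝ → Matrix n n ℝ} {v : ℝ → n → ℝ}
  {b : n → ℝ} {γ : ℝ}

theorem differentiable_apply_of_eq_add_smul_mulVec (hK : ∀ z, K z ∈ rowStochastic ℝ n)
    (hKdiff : ∀ i j, Differentiable ℝ fun z => K z i j) (hγ : |γ| < 1)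
    (hv : ∀ z, v z = b + γ • (K z *ᵥ v z)) (i : n) :
    Differentiable ℝ fun z => v z i := by
  refine differentiable_of_mulVec_eq (M := fun z => 1 - γ • K z) (b := b) (fun i j => ?_)
    (fun z => det_one_sub_smul_ne_zero_of_mem_rowStochastic (hK z) hγ) (fun z => ?_) i
  · simp only [sub_apply, smul_apply, smul_eq_mul]
    exact (differentiable_const _).sub ((hKdiff i j).const_mul γ)
  · rw [sub_mulVec, one_mulVec, smul_mulVec, sub_eq_iff_eq_add]
    exact hv z

theorem hasDerivAt_apply_of_eq_add_smul_mulVec {K' : ℝ → Matrix n n ℝ}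
    (hK : ∀ z, K z ∈ rowStochastic ℝ n) (hK' : ∀ z i j, HasDerivAt (fun z => K z i j) (K' z i j) z)
    (hγ : |γ| < 1) (hv : ∀ z, v z = b + γ • (K z *ᵥ v z)) (z : ℝ) (i : n) :
    HasDerivAt (fun z => v z i)
      (γ * ((K' z *ᵥ v z) i + (K z *ᵥ fun j => deriv (fun z => v z j) z) i)) z := by
  have hvdiff := differentiable_apply_of_eq_add_smul_mulVec hK
    (fun i j z => (hK' z i j).differentiableAt) hγ hv
  rw [show (fun z => v z i) = fun z => b i + γ * (K z *ᵥ v z) i from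
    funext fun z => congrFun (hv z) i]
  exact ((hasDerivAt_mulVec_apply (hK' z) (fun j => (hvdiff j z).hasDerivAt) i).const_mul
    γ).const_add (b i)

end DiscountedFixedPoint

end Matrix

section OptionMDP

variable {S A Ω : Type*} [Fintype A] (π : Ω → S → A → ℝ) (P : S → A → S → ℝ) (β : Ω → S → ℝ)

/-- The linear part of the affine map `μ ↦ augmentedKernel π P β μ`. -/
def terminationKernel (μ : S → Ω → ℝ) : Matrix (S × Ω) (S × Ω) ℝ :=
  of fun x y => ∑ a, π x.2 x.1 a * P x.1 a y.1 * (β x.2 y.1 * μ y.1 y.2)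

def augmentedKernel [DecidableEq Ω] (μ : S → Ω → ℝ) : Matrix (S × Ω) (S × Ω) ℝ :=
  of fun x y => ∑ a, π x.2 x.1 a * P x.1 a y.1 *
    ((1 - β x.2 y.1) * (if y.2 = x.2 then 1 else 0) + β x.2 y.1 * μ y.1 y.2)

theorem hasDerivAt_augmentedKernel_apply [DecidableEq Ω] {μ : ℝ → S → Ω → ℝ} {μ' : S → Ω → ℝ}
    {z : ℝ} (hμ : ∀ s ω, HasDerivAt (fun z => μ z s ω) (μ' s ω) z) (x y : S × Ω) :
    HasDerivAt (fun z => augmentedKernel π P β (μ z) x y) (terminationKernel π P β μ' x y) z :=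
  HasDerivAt.fun_sum fun _ _ => (((hμ y.1 y.2).const_mul _).const_add _).const_mul _

variable [Fintype S] [Fintype Ω]

theorem terminationKernel_mulVec (μ : S → Ω → ℝ) (q : S × Ω → ℝ) (s : S) (ω : Ω) :
    (terminationKernel π P β μ *ᵥ q) (s, ω) =
      ∑ a, π ω s a * ∑ s', P s a s' * (β ω s' * ∑ ω', μ s' ω' * q (s', ω')) := by
  simp only [terminationKernel, mulVec, dotProduct, of_apply, Fintype.sum_prod_type, sum_mul]
  rw [Finset.sum_comm_cycle]
  simp only [mul_sum]
  exact Finset.sum_congr rfl fun a _ => Finset.sum_congr rfl fun s' _ =>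
    Finset.sum_congr rfl fun ω' _ => by ring

variable [DecidableEq Ω]

theorem augmentedKernel_mulVec (μ : S → Ω → ℝ) (q : S × Ω → ℝ) (s : S) (ω : Ω) :
    (augmentedKernel π P β μ *ᵥ q) (s, ω) = ∑ a, π ω s a * ∑ s', P s a s' *
      ((1 - β ω s') * q (s', ω) + β ω s' * ∑ ω', μ s' ω' * q (s', ω')) := by
  simp only [augmentedKernel, mulVec, dotProduct, of_apply, Fintype.sum_prod_type, sum_mul]
  rw [Finset.sum_comm_cycle]
  refine Finset.sum_congr rfl fun a _ => ?_
  rw [mul_sum]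
  refine Finset.sum_congr rfl fun s' _ => ?_
  simp only [mul_add, add_mul, sum_add_distrib, mul_sum, mul_ite, ite_mul, mul_one, mul_zero,
    zero_mul, sum_ite_eq', mem_univ, if_true]
  congr 1
  · ring
  · exact Finset.sum_congr rfl fun _ _ => by ring

theorem augmentedKernel_mem_rowStochastic [DecidableEq S] {μ : S → Ω → ℝ}
    (hπ0 : ∀ ω s a, 0 ≤ π ω s a) (hπ1 : ∀ ω s, ∑ a, π ω s a = 1)
    (hP0 : ∀ s a s', 0 ≤ P s a s') (hP1 : ∀ s a, ∑ s', P s a s' = 1)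
    (hβ0 : ∀ ω s, 0 ≤ β ω s) (hβ1 : ∀ ω s, β ω s ≤ 1)
    (hμ0 : ∀ s ω, 0 ≤ μ s ω) (hμ1 : ∀ s, ∑ ω, μ s ω = 1) :
    augmentedKernel π P β μ ∈ rowStochastic ℝ (S × Ω) := by
  refine mem_rowStochastic.2 ⟨fun x y => sum_nonneg fun a _ => ?_, funext fun ⟨s, ω⟩ => ?_⟩
  · exact mul_nonneg (mul_nonneg (hπ0 _ _ _) (hP0 _ _ _))
      (add_nonneg (mul_nonneg (sub_nonneg.2 (hβ1 _ _)) (ite_nonneg zero_le_one le_rfl))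
        (mul_nonneg (hβ0 _ _) (hμ0 _ _)))
  · simp [augmentedKernel_mulVec, hμ1, hP1, hπ1]

theorem optionValue_eq_add_smul_augmentedKernel_mulVec {r : S → A → ℝ} {γ : ℝ}
    {μ : S → Ω → ℝ} {QU : S → Ω → A → ℝ} {QΩ : S → Ω → ℝ}
    (hQΩ : ∀ s ω, QΩ s ω = ∑ a, π ω s a * QU s ω a)
    (hQU : ∀ s ω a, QU s ω a = r s a + γ * ∑ s', P s a s' *
      ((1 - β ω s') * QΩ s' ω + β ω s' * ∑ ω', μ s' ω' * QΩ s' ω')) :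
    (fun x : S × Ω => QΩ x.1 x.2) = (fun x => ∑ a, π x.2 x.1 a * r x.1 a) +
      γ • (augmentedKernel π P β μ *ᵥ fun x => QΩ x.1 x.2) := by
  funext ⟨s, ω⟩
  rw [Pi.add_apply, Pi.smul_apply, smul_eq_mul, hQΩ s ω, augmentedKernel_mulVec, mul_sum,
    ← sum_add_distrib]
  exact Finset.sum_congr rfl fun a _ => by rw [hQU]; ring

end OptionMDP

section InterestPolicy

variable {S Ω : Type*} [Fintype Ω]

noncomputable def interestPolicy (I πΩ : S → Ω → ℝ) (s : S) (ω : Ω) : ℝ :=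
  I s ω * πΩ s ω / ∑ ω', I s ω' * πΩ s ω'

theorem interestPolicy_nonneg {I πΩ : S → Ω → ℝ} (hI0 : ∀ s ω, 0 ≤ I s ω)
    (hπΩ0 : ∀ s ω, 0 ≤ πΩ s ω) (s : S) (ω : Ω) : 0 ≤ interestPolicy I πΩ s ω :=
  div_nonneg (mul_nonneg (hI0 s ω) (hπΩ0 s ω))
    (sum_nonneg fun ω' _ => mul_nonneg (hI0 s ω') (hπΩ0 s ω'))

theorem sum_interestPolicy {I πΩ : S → Ω → ℝ} {s : S} (hsum : ∑ ω, I s ω * πΩ s ω ≠ 0) :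
    ∑ ω, interestPolicy I πΩ s ω = 1 := by
  simp only [interestPolicy, ← sum_div, div_self hsum]

theorem differentiable_interestPolicy {I : ℝ → S → Ω → ℝ} {πΩ : S → Ω → ℝ} {s : S}
    (hIdiff : ∀ ω, Differentiable ℝ fun z => I z s ω) (hsum : ∀ z, ∑ ω, I z s ω * πΩ s ω ≠ 0)
    (ω : Ω) : Differentiable ℝ fun z => interestPolicy (I z) πΩ s ω :=
  ((hIdiff ω).mul_const _).div (Differentiable.fun_sum fun ω' _ => (hIdiff ω').mul_const _) hsum

end InterestPolicy

theorem interest_gradient_one_step_expansion_general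
    {S A Ω : Type*} [Fintype S] [Fintype A] [Fintype Ω]
    [DecidableEq Ω]
    (r : S → A → ℝ) (P : S → A → S → ℝ)
    (hP0 : ∀ s a s', 0 ≤ P s a s') (hP1 : ∀ s a, ∑ s', P s a s' = 1)
    (γ : ℝ) (hγ0 : 0 ≤ γ) (hγ1 : γ < 1)
    (π : Ω → S → A → ℝ)
    (hπ0 : ∀ ω s a, 0 ≤ π ω s a) (hπ1 : ∀ ω s, ∑ a, π ω s a = 1)
    (β : Ω → S → ℝ) (hβ0 : ∀ ω s, 0 ≤ β ω s) (hβ1 : ∀ ω s, β ω s ≤ 1)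
    (πΩ : S → Ω → ℝ)
    (hπΩ0 : ∀ s ω, 0 ≤ πΩ s ω)
    (I : ℝ → S → Ω → ℝ)
    (hIdiff : ∀ s ω, Differentiable ℝ (fun z => I z s ω))
    (hI0 : ∀ z s ω, 0 ≤ I z s ω)
    (hIpos : ∀ z s, 0 < ∑ ω, I z s ω * πΩ s ω)
    (πI : ℝ → S → Ω → ℝ)
    (hπI : ∀ z s ω, πI z s ω = I z s ω * πΩ s ω / ∑ ω', I z s ω' * πΩ s ω')
    (QU : ℝ → S → Ω → A → ℝ) (QΩ : ℝ → S → Ω → ℝ)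
    (hQΩ : ∀ z s ω, QΩ z s ω = ∑ a, π ω s a * QU z s ω a)
    (hQU : ∀ z s ω a, QU z s ω a = r s a + γ * ∑ s', P s a s' *
      ((1 - β ω s') * QΩ z s' ω + β ω s' * ∑ ω', πI z s' ω' * QΩ z s' ω'))
    (P₁ : ℝ → Matrix (S × Ω) (S × Ω) ℝ)
    (hP₁ : ∀ z s ω s' ω', P₁ z (s, ω) (s', ω') =
      ∑ a, π ω s a * P s a s' *
        ((1 - β ω s') * (if ω' = ω then 1 else 0) + β ω s' * πI z s' ω')) :
    ∀ z s ω,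
      deriv (fun z => QΩ z s ω) z =
        (γ * ∑ a, π ω s a * ∑ s', P s a s' * (β ω s' *
            ∑ ω', deriv (fun z => πI z s' ω') z * QΩ z s' ω')) +
          γ * ∑ x : S × Ω, P₁ z (s, ω) x * deriv (fun z => QΩ z x.1 x.2) z := by
  classical
  obtain rfl : πI = fun z => interestPolicy (I z) πΩ :=
    funext fun z => funext fun s => funext (hπI z s)
  obtain rfl : P₁ = fun z => augmentedKernel π P β (interestPolicy (I z) πΩ) :=
    funext fun z => Matrix.ext fun x y => hP₁ z x.1 x.2 y.1 y.2
  have hkernel_stoch z := augmentedKernel_mem_rowStochastic π P β hπ0 hπ1 hP0 hP1 hβ0 hβ1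
      (interestPolicy_nonneg (hI0 z) hπΩ0) fun s => sum_interestPolicy (hIpos z s).ne'
  have hkernel_deriv z := hasDerivAt_augmentedKernel_apply π P β (z := z) fun s ω =>
    (differentiable_interestPolicy (hIdiff s) (fun z => (hIpos z s).ne') ω z).hasDerivAt
  intro z s ω
  have hbellman z := optionValue_eq_add_smul_augmentedKernel_mulVec π P β (hQΩ z) (hQU z)
  rw [(hasDerivAt_apply_of_eq_add_smul_mulVec hkernel_stoch hkernel_deriv
    (abs_lt.2 ⟨by linarith, hγ1⟩) hbellman z (s, ω)).deriv, mul_add, terminationKernel_mulVec]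
  rfl

/-- The derivative of the option-value function `Q_Ω^z` with respect to the
interest parameter `z` satisfies the recursive (one-step expansion) identity
`∂Q_Ω^z(s,ω)/∂z = g_z(s,ω) + γ Σ_{(s',ω')} P₁^z((s',ω')|(s,ω)) ∂Q_Ω^z(s',ω')/∂z`. -/
theorem interest_gradient_one_step_expansion
    {S A Ω : Type*} [Fintype S] [Fintype A] [Fintype Ω]
    [DecidableEq S] [DecidableEq A] [DecidableEq Ω]
    [Nonempty S] [Nonempty A] [Nonempty Ω]
    (r : S → A → ℝ) (P : S → A → S → ℝ)
    (hP0 : ∀ s a s', 0 ≤ P s a s') (hP1 : ∀ s a, ∑ s', P s a s' = 1)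
    (γ : ℝ) (hγ0 : 0 ≤ γ) (hγ1 : γ < 1)
    (π : Ω → S → A → ℝ)
    (hπ0 : ∀ ω s a, 0 ≤ π ω s a) (hπ1 : ∀ ω s, ∑ a, π ω s a = 1)
    (β : Ω → S → ℝ) (hβ0 : ∀ ω s, 0 ≤ β ω s) (hβ1 : ∀ ω s, β ω s ≤ 1)
    (πΩ : S → Ω → ℝ)
    (hπΩ0 : ∀ s ω, 0 ≤ πΩ s ω) (hπΩ1 : ∀ s, ∑ ω, πΩ s ω = 1)
    (I : ℝ → S → Ω → ℝ)
    (hIdiff : ∀ s ω, Differentiable ℝ (fun z => I z s ω))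
    (hI0 : ∀ z s ω, 0 ≤ I z s ω)
    (hIpos : ∀ z s, 0 < ∑ ω, I z s ω * πΩ s ω)
    (πI : ℝ → S → Ω → ℝ)
    (hπI : ∀ z s ω, πI z s ω = I z s ω * πΩ s ω / ∑ ω', I z s ω' * πΩ s ω')
    (QU : ℝ → S → Ω → A → ℝ) (QΩ : ℝ → S → Ω → ℝ)
    (hQΩ : ∀ z s ω, QΩ z s ω = ∑ a, π ω s a * QU z s ω a)
    (hQU : ∀ z s ω a, QU z s ω a = r s a + γ * ∑ s', P s a s' *
      ((1 - β ω s') * QΩ z s' ω + β ω s' * ∑ ω', πI z s' ω' * QΩ z s' ω'))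
    (P₁ : ℝ → Matrix (S × Ω) (S × Ω) ℝ)
    (hP₁ : ∀ z s ω s' ω', P₁ z (s, ω) (s', ω') =
      ∑ a, π ω s a * P s a s' *
        ((1 - β ω s') * (if ω' = ω then 1 else 0) + β ω s' * πI z s' ω')) :
    ∀ z s ω,
      deriv (fun z => QΩ z s ω) z =
        (γ * ∑ a, π ω s a * ∑ s', P s a s' * (β ω s' *
            ∑ ω', deriv (fun z => πI z s' ω') z * QΩ z s' ω')) +
          γ * ∑ x : S × Ω, P₁ z (s, ω) x * deriv (fun z => QΩ z x.1 x.2) z :=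
  interest_gradient_one_step_expansion_general r P hP0 hP1 γ hγ0 hγ1 π hπ0 hπ1 β hβ0 hβ1 πΩ hπΩ0 I
    hIdiff hI0 hIpos πI hπI QU QΩ hQΩ hQU P₁ hP₁
end

section
/- (Intra-option policy gradient under the interest policy over options.) Consider a finite MDP with options with a fixed interest policy over options π_I, in which the intra-option policies are parameterized: for each option ω, π_{ω,θ} : ℝ × S × A → ℝ with θ ↦ π_{ω,θ}(a|s) differentiable for every (s,a), π_{ω,θ}(a|s) ≥ 0 and Σ_a π_{ω,θ}(a|s) = 1 for all θ; write Q_Ω^θ and Q_U^θ for the corresponding option-value functions, P₁^θ((s',ω')|(s,ω)) = Σ_a π_{ω,θ}(a|s) P(s'|s,a) [ (1−β_ω(s')) 1{ω'=ω} + β_ω(s') π_I(ω'|s') ] for the augmented transition kernel over state-option pairs, and μ̂^θ((s̃,ω̃)|(s,ω)) = Σ_{t=0}^∞ γ^t (P₁^θ)^t((s̃,ω̃)|(s,ω)) for the discounted weighting of state-option pairs along trajectories starting from (s,ω). Then the gradient of the expected discounted return with respect to θ at (s,ω) is: ∂Q_Ω^θ(s,ω)/∂θ = Σ_{(s̃,ω̃)}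 μ̂^θ((s̃,ω̃)|(s,ω)) Σ_a (∂π_{ω̃,θ}(a|s̃)/∂θ) Q_U^θ(s̃,ω̃,a). -/
/-!
Over state-option pairs the Bellman equations read `Q_Ω = r_Ω + γ P₁ Q_Ω`, with `P₁` row
stochastic. Hence `1 - γ P₁` is invertible with inverse the discounted occupancy
`μ̂ = ∑ₜ γᵗ P₁ᵗ`, so `Q_Ω = μ̂ r_Ω` is differentiable in `θ` by Cramer's rule. Differentiating the
Bellman equations, `∂_θ Q_Ω` satisfies the same equation with reward
`∑ₐ ∂_θ π_ω(a|s) Q_U(s,ω,a)` in place of `r_Ω`, and solving it with `μ̂` gives the formula.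
-/

open Matrix

section MatrixCalculus

variable {𝕜 E n : Type*} [NontriviallyNormedField 𝕜] [NormedAddCommGroup E] [NormedSpace 𝕜 E]
  [Fintype n] [DecidableEq n] {A : E → Matrix n n 𝕜}

theorem Differentiable.matrix_det (hA : ∀ i j, Differentiable 𝕜 fun x => A x i j) :
    Differentiable 𝕜 fun x => (A x).det := by
  simp only [det_apply']
  fun_prop

/-- Cramer's rule makes the entries of `A⁻¹` rational functions of the entries of `A`. -/
theorem Differentiable.matrix_inv_apply (hA : ∀ i j, Differentiable 𝕜 fun x => A x i j)
    (hdet : ∀ x, (A x).det ≠ 0) (i j : n) :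
    Differentiable 𝕜 fun x => (A x)⁻¹ i j := by
  have hadj : Differentiable 𝕜 fun x => (A x).adjugate i j := by
    simp only [adjugate_apply]
    refine Differentiable.matrix_det fun k l => ?_
    rcases eq_or_ne k j with rfl | hk
    · simp only [updateRow_self]
      fun_prop
    · simpa only [updateRow_ne hk] using hA k l
  simp only [Matrix.inv_def, Matrix.smul_apply, Ring.inverse_eq_inv', smul_eq_mul]
  exact ((Differentiable.matrix_det hA).inv hdet).mul hadj

end MatrixCalculus

section DiscountedOccupancy

variable {ι : Type*} [Fintype ι] [DecidableEq ι] {Q : Matrix ι ι ℝ} {γ : ℝ}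

theorem summable_smul_pow_of_mem_rowStochastic (hQ : Q ∈ rowStochastic ℝ ι) (hγ0 : 0 ≤ γ)
    (hγ1 : γ < 1) : Summable fun t : ℕ => (γ • Q) ^ t := by
  refine Pi.summable.2 fun x => Pi.summable.2 fun y => ?_
  have hQt (t : ℕ) : Q ^ t ∈ rowStochastic ℝ ι := pow_mem hQ t
  refine Summable.of_nonneg_of_le (fun t => ?_) (fun t => ?_)
    (summable_geometric_of_lt_one hγ0 hγ1)
  · simp only [smul_pow, Matrix.smul_apply, smul_eq_mul]
    exact mul_nonneg (pow_nonneg hγ0 t) (nonneg_of_mem_rowStochastic (hQt t))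
  · simp only [smul_pow, Matrix.smul_apply, smul_eq_mul]
    exact mul_le_of_le_one_right (pow_nonneg hγ0 t) (le_one_of_mem_rowStochastic (hQt t))

theorem tsum_smul_pow_apply (h : Summable fun t : ℕ => (γ • Q) ^ t) (x y : ι) :
    (∑' t : ℕ, (γ • Q) ^ t) x y = ∑' t : ℕ, γ ^ t * (Q ^ t) x y := by
  simpa [smul_pow] using (Pi.hasSum.1 (Pi.hasSum.1 h.hasSum x) y).tsum_eq.symm

theorem inv_one_sub_smul_eq_tsum (hQ : Q ∈ rowStochastic ℝ ι) (hγ0 : 0 ≤ γ) (hγ1 : γ < 1) :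
    (1 - γ • Q)⁻¹ = ∑' t : ℕ, (γ • Q) ^ t :=
  inv_eq_left_inv (summable_smul_pow_of_mem_rowStochastic hQ hγ0 hγ1).tsum_pow_mul_one_sub

theorem det_one_sub_smul_ne_zero (hQ : Q ∈ rowStochastic ℝ ι) (hγ0 : 0 ≤ γ) (hγ1 : γ < 1) :
    (1 - γ • Q).det ≠ 0 :=
  (isUnit_det_of_left_inverse
    (summable_smul_pow_of_mem_rowStochastic hQ hγ0 hγ1).tsum_pow_mul_one_sub).ne_zero

theorem eq_tsum_smul_pow_mulVec_of_eq_add (hQ : Q ∈ rowStochastic ℝ ι) (hγ0 : 0 ≤ γ)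
    (hγ1 : γ < 1) {v g : ι → ℝ} (h : v = g + γ • Q *ᵥ v) :
    v = (∑' t : ℕ, (γ • Q) ^ t) *ᵥ g := by
  have hg : (1 - γ • Q) *ᵥ v = g := by
    rw [sub_mulVec, one_mulVec, smul_mulVec]
    nth_rewrite 1 [h]
    abel
  rw [← hg, mulVec_mulVec,
    (summable_smul_pow_of_mem_rowStochastic hQ hγ0 hγ1).tsum_pow_mul_one_sub, one_mulVec]

theorem differentiable_of_eq_add_smul_mulVec {E : Type*} [NormedAddCommGroup E]
    [NormedSpace ℝ E] {Q : E → Matrix ι ι ℝ} {g v : E → ι → ℝ}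
    (hQ : ∀ θ, Q θ ∈ rowStochastic ℝ ι) (hQd : ∀ x y, Differentiable ℝ fun θ => Q θ x y)
    (hg : ∀ x, Differentiable ℝ fun θ => g θ x) (hγ0 : 0 ≤ γ) (hγ1 : γ < 1)
    (hv : ∀ θ, v θ = g θ + γ • Q θ *ᵥ v θ) (x : ι) :
    Differentiable ℝ fun θ => v θ x := by
  have hv_eq (θ : E) : v θ x = ∑ y, (1 - γ • Q θ)⁻¹ x y * g θ y := by
    rw [inv_one_sub_smul_eq_tsum (hQ θ) hγ0 hγ1,
      eq_tsum_smul_pow_mulVec_of_eq_add (hQ θ) hγ0 hγ1 (hv θ)]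
    rfl
  have hM (i j : ι) : Differentiable ℝ fun θ => (1 - γ • Q θ) i j := by
    simp only [Matrix.sub_apply, Matrix.smul_apply, smul_eq_mul]
    fun_prop
  simp only [hv_eq]
  have hdet (θ : E) : (1 - γ • Q θ).det ≠ 0 := det_one_sub_smul_ne_zero (hQ θ) hγ0 hγ1
  exact Differentiable.fun_sum fun y _ => (Differentiable.matrix_inv_apply hM hdet x y).mul (hg y)

end DiscountedOccupancy

theorem div_sum_mem_stdSimplex {𝕜 ι : Type*} [Field 𝕜] [LinearOrder 𝕜] [IsStrictOrderedRing 𝕜]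
    [Fintype ι] {w : ι → 𝕜} (hw : ∀ i, 0 ≤ w i) (hsum : 0 < ∑ i, w i) :
    (fun i => w i / ∑ j, w j) ∈ stdSimplex 𝕜 ι :=
  ⟨fun i => div_nonneg (hw i) hsum.le, by rw [← Finset.sum_div, div_self hsum.ne']⟩

section Options

variable {S A Ω : Type*} [Fintype Ω]

/-- The paper's `U(ω, s)`: the value of arriving in `s` while executing `ω`. -/
def valueUponArrival (β : Ω → S → ℝ) (πI : S → Ω → ℝ) (v : S → Ω → ℝ) (s : S) (ω : Ω) : ℝ :=
  (1 - β ω s) * v s ω + β ω s * ∑ ω', πI s ω' * v s ω'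

variable {β : Ω → S → ℝ} {πI : S → Ω → ℝ}

theorem valueUponArrival_one (hπI : ∀ s, πI s ∈ stdSimplex ℝ Ω) (s : S) (ω : Ω) :
    valueUponArrival β πI (fun _ _ => 1) s ω = 1 := by
  simp [valueUponArrival, (hπI s).2]

theorem hasDerivAt_valueUponArrival {v : ℝ → S → Ω → ℝ} {v' : S → Ω → ℝ} {θ : ℝ}
    (hv : ∀ s ω, HasDerivAt (fun θ => v θ s ω) (v' s ω) θ) (s : S) (ω : Ω) :
    HasDerivAt (fun θ => valueUponArrival β πI (v θ) s ω) (valueUponArrival β πI v' s ω) θ :=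
  ((hv s ω).const_mul _).add ((HasDerivAt.fun_sum fun ω' _ => (hv s ω').const_mul _).const_mul _)

variable [DecidableEq Ω]

theorem sum_optionTransition_mul (v : S → Ω → ℝ) (s : S) (ω : Ω) :
    ∑ ω', ((1 - β ω s) * (if ω' = ω then 1 else 0) + β ω s * πI s ω') * v s ω' =
      valueUponArrival β πI v s ω := by
  simp [valueUponArrival, add_mul, Finset.sum_add_distrib, mul_assoc, Finset.mul_sum]

variable [Fintype S] [Fintype A]

/-- The paper's augmented kernel `P₁` on state-option pairs. -/
def optionKernel (π : Ω → S → A → ℝ) (P : S → A → S → ℝ) (β : Ω → S → ℝ) (πI : S → Ω → ℝ) :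
    Matrix (S × Ω) (S × Ω) ℝ :=
  of fun x y => ∑ a, π x.2 x.1 a * P x.1 a y.1 *
    ((1 - β x.2 y.1) * (if y.2 = x.2 then 1 else 0) + β x.2 y.1 * πI y.1 y.2)

def optionReward (π : Ω → S → A → ℝ) (r : S → A → ℝ) : S × Ω → ℝ :=
  fun x => ∑ a, π x.2 x.1 a * r x.1 a

variable {P : S → A → S → ℝ}

theorem optionKernel_mulVec (π : Ω → S → A → ℝ) (v : S → Ω → ℝ) (x : S × Ω) :
    (optionKernel π P β πI *ᵥ fun y => v y.1 y.2) x =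
      ∑ a, π x.2 x.1 a * ∑ s', P x.1 a s' * valueUponArrival β πI v s' x.2 := by
  simp only [← sum_optionTransition_mul, Finset.mul_sum, mulVec, dotProduct, optionKernel,
    of_apply, Fintype.sum_prod_type, Finset.sum_mul]
  conv_rhs => rw [Finset.sum_comm]
  refine Finset.sum_congr rfl fun s' _ => ?_
  rw [Finset.sum_comm]
  simp only [mul_assoc]

theorem optionKernel_mem_rowStochastic [DecidableEq S] {π : Ω → S → A → ℝ}
    (hπ : ∀ ω s, π ω s ∈ stdSimplex ℝ A) (hP : ∀ s a, P s a ∈ stdSimplex ℝ S)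
    (hβ0 : ∀ ω s, 0 ≤ β ω s) (hβ1 : ∀ ω s, β ω s ≤ 1)
    (hπI : ∀ s, πI s ∈ stdSimplex ℝ Ω) :
    optionKernel π P β πI ∈ rowStochastic ℝ (S × Ω) := by
  refine ⟨fun x y => Finset.sum_nonneg fun a _ => ?_, funext fun x => ?_⟩
  · have hcont : 0 ≤ (1 - β x.2 y.1) * (if y.2 = x.2 then 1 else 0) := by
      split_ifs <;> linarith [hβ1 x.2 y.1]
    exact mul_nonneg (mul_nonneg ((hπ _ _).1 a) ((hP _ _).1 _))
      (add_nonneg hcont (mul_nonneg (hβ0 _ _) ((hπI _).1 _)))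
  · refine (optionKernel_mulVec π (fun _ _ => 1) x).trans ?_
    simp [valueUponArrival_one hπI, (hP _ _).2, (hπ _ _).2]

variable {r : S → A → ℝ} {γ : ℝ}

theorem optionValue_eq_optionReward_add {π : Ω → S → A → ℝ} {QU : S → Ω → A → ℝ}
    {QΩ : S → Ω → ℝ} (hQΩ : ∀ s ω, QΩ s ω = ∑ a, π ω s a * QU s ω a)
    (hQU : ∀ s ω a, QU s ω a = r s a + γ * ∑ s', P s a s' * valueUponArrival β πI QΩ s' ω) :
    (fun x : S × Ω => QΩ x.1 x.2) =
      optionReward π r + γ • optionKernel π P β πI *ᵥ fun x => QΩ x.1 x.2 := by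
  funext x
  rw [Pi.add_apply, Pi.smul_apply, optionKernel_mulVec, smul_eq_mul, Finset.mul_sum, optionReward,
    ← Finset.sum_add_distrib, hQΩ]
  refine Finset.sum_congr rfl fun a _ => ?_
  rw [hQU]
  ring

theorem deriv_optionValue_eq_add {π : ℝ → Ω → S → A → ℝ} {QU : ℝ → S → Ω → A → ℝ}
    {QΩ : ℝ → S → Ω → ℝ} (hπ : ∀ ω s a, Differentiable ℝ fun θ => π θ ω s a)
    (hQΩd : ∀ s ω, Differentiable ℝ fun θ => QΩ θ s ω)
    (hQΩ : ∀ θ s ω, QΩ θ s ω = ∑ a, π θ ω s a * QU θ s ω a)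
    (hQU : ∀ θ s ω a,
      QU θ s ω a = r s a + γ * ∑ s', P s a s' * valueUponArrival β πI (QΩ θ) s' ω) (θ : ℝ) :
    (fun x : S × Ω => deriv (fun θ => QΩ θ x.1 x.2) θ) =
      (fun x => ∑ a, deriv (fun θ => π θ x.2 x.1 a) θ * QU θ x.1 x.2 a) +
        γ • optionKernel (π θ) P β πI *ᵥ fun x => deriv (fun θ => QΩ θ x.1 x.2) θ := by
  let d : S → Ω → ℝ := fun s ω => deriv (fun θ => QΩ θ s ω) θ
  have hd (s : S) (ω : Ω) : HasDerivAt (fun θ => QΩ θ s ω) (d s ω) θ :=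
    (hQΩd s ω θ).hasDerivAt
  have hQUd (s : S) (ω : Ω) (a : A) : HasDerivAt (fun θ => QU θ s ω a)
      (γ * ∑ s', P s a s' * valueUponArrival β πI d s' ω) θ := by
    simp only [hQU]
    exact ((HasDerivAt.fun_sum fun s' _ =>
      (hasDerivAt_valueUponArrival hd s' ω).const_mul _).const_mul γ).const_add _
  funext x
  have hQΩx := HasDerivAt.fun_sum fun a (_ : a ∈ Finset.univ) =>
    (hπ x.2 x.1 a θ).hasDerivAt.fun_mul (hQUd x.1 x.2 a)
  rw [← funext (hQΩ · x.1 x.2)] at hQΩx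
  rw [hQΩx.deriv, Pi.add_apply, Pi.smul_apply, optionKernel_mulVec (π θ) d, smul_eq_mul,
    Finset.sum_add_distrib, Finset.mul_sum]
  congr 1
  exact Finset.sum_congr rfl fun a _ => by ring

end Options

theorem intra_option_policy_gradient_under_interest_policy_general
    {S A Ω : Type*} [Fintype S] [Fintype A] [Fintype Ω]
    [DecidableEq S] [DecidableEq Ω]
    (r : S → A → ℝ) (P : S → A → S → ℝ)
    (hP0 : ∀ s a s', 0 ≤ P s a s') (hP1 : ∀ s a, ∑ s', P s a s' = 1)
    (γ : ℝ) (hγ0 : 0 ≤ γ) (hγ1 : γ < 1)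
    (π : ℝ → Ω → S → A → ℝ)
    (hπdiff : ∀ ω s a, Differentiable ℝ (fun θ => π θ ω s a))
    (hπ0 : ∀ θ ω s a, 0 ≤ π θ ω s a) (hπ1 : ∀ θ ω s, ∑ a, π θ ω s a = 1)
    (β : Ω → S → ℝ) (hβ0 : ∀ ω s, 0 ≤ β ω s) (hβ1 : ∀ ω s, β ω s ≤ 1)
    (πΩ : S → Ω → ℝ)
    (hπΩ0 : ∀ s ω, 0 ≤ πΩ s ω)
    (I : S → Ω → ℝ) (hI0 : ∀ s ω, 0 ≤ I s ω)
    (hIpos : ∀ s, 0 < ∑ ω, I s ω * πΩ s ω)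
    (πI : S → Ω → ℝ)
    (hπI : ∀ s ω, πI s ω = I s ω * πΩ s ω / ∑ ω', I s ω' * πΩ s ω')
    (QU : ℝ → S → Ω → A → ℝ) (QΩ : ℝ → S → Ω → ℝ)
    (hQΩ : ∀ θ s ω, QΩ θ s ω = ∑ a, π θ ω s a * QU θ s ω a)
    (hQU : ∀ θ s ω a, QU θ s ω a = r s a + γ * ∑ s', P s a s' *
      ((1 - β ω s') * QΩ θ s' ω + β ω s' * ∑ ω', πI s' ω' * QΩ θ s' ω'))
    (P₁ : ℝ → Matrix (S × Ω) (S × Ω) ℝ)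
    (hP₁ : ∀ θ s ω s' ω', P₁ θ (s, ω) (s', ω') =
      ∑ a, π θ ω s a * P s a s' *
        ((1 - β ω s') * (if ω' = ω then 1 else 0) + β ω s' * πI s' ω')) :
    ∀ θ s ω,
      deriv (fun θ => QΩ θ s ω) θ =
        ∑ x : S × Ω, (∑' t : ℕ, γ ^ t * (P₁ θ ^ t) (s, ω) x) *
          ∑ a, deriv (fun θ => π θ x.2 x.1 a) θ * QU θ x.1 x.2 a := by
  intro θ s ω
  obtain rfl : P₁ = fun θ => optionKernel (π θ) P β πI :=
    funext fun θ => ext fun x y => hP₁ θ x.1 x.2 y.1 y.2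
  have hπI' (s : S) : πI s ∈ stdSimplex ℝ Ω := by
    rw [funext (hπI s)]
    exact div_sum_mem_stdSimplex (fun ω => mul_nonneg (hI0 s ω) (hπΩ0 s ω)) (hIpos s)
  have hK (θ : ℝ) : optionKernel (π θ) P β πI ∈ rowStochastic ℝ (S × Ω) :=
    optionKernel_mem_rowStochastic (fun ω s => ⟨hπ0 θ ω s, hπ1 θ ω s⟩)
      (fun s a => ⟨hP0 s a, hP1 s a⟩) hβ0 hβ1 hπI'
  have hQΩd : ∀ x : S × Ω, Differentiable ℝ fun θ => QΩ θ x.1 x.2 :=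
    differentiable_of_eq_add_smul_mulVec hK
      (fun x y => by simp only [optionKernel, of_apply]; fun_prop)
      (fun x => by simp only [optionReward]; fun_prop) hγ0 hγ1
      fun θ => optionValue_eq_optionReward_add (hQΩ θ) (hQU θ)
  have hd := eq_tsum_smul_pow_mulVec_of_eq_add (hK θ) hγ0 hγ1
    (deriv_optionValue_eq_add hπdiff (fun s ω => hQΩd (s, ω)) hQΩ hQU θ)
  rw [congrFun hd (s, ω)]
  simp only [mulVec, dotProduct,
    tsum_smul_pow_apply (summable_smul_pow_of_mem_rowStochastic (hK θ) hγ0 hγ1)]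

/-- **intra-option policy gradient under the interest policy over options.**
With a fixed interest policy over options `πI` and intra-option policies parameterized by
`θ`, the gradient of the expected discounted return with respect to `θ` at `(s,ω)` is
`Σ_{(s̃,ω̃)} μ̂^θ((s̃,ω̃)|(s,ω)) Σ_a (∂π_{ω̃,θ}(a|s̃)/∂θ) Q_U^θ(s̃,ω̃,a)`. -/
theorem intra_option_policy_gradient_under_interest_policy
    {S A Ω : Type*} [Fintype S] [Fintype A] [Fintype Ω]
    [DecidableEq S] [DecidableEq A] [DecidableEq Ω]
    [Nonempty S] [Nonempty A] [Nonempty Ω]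
    (r : S → A → ℝ) (P : S → A → S → ℝ)
    (hP0 : ∀ s a s', 0 ≤ P s a s') (hP1 : ∀ s a, ∑ s', P s a s' = 1)
    (γ : ℝ) (hγ0 : 0 ≤ γ) (hγ1 : γ < 1)
    (π : ℝ → Ω → S → A → ℝ)
    (hπdiff : ∀ ω s a, Differentiable ℝ (fun θ => π θ ω s a))
    (hπ0 : ∀ θ ω s a, 0 ≤ π θ ω s a) (hπ1 : ∀ θ ω s, ∑ a, π θ ω s a = 1)
    (β : Ω → S → ℝ) (hβ0 : ∀ ω s, 0 ≤ β ω s) (hβ1 : ∀ ω s, β ω s ≤ 1)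
    (πΩ : S → Ω → ℝ)
    (hπΩ0 : ∀ s ω, 0 ≤ πΩ s ω) (hπΩ1 : ∀ s, ∑ ω, πΩ s ω = 1)
    (I : S → Ω → ℝ) (hI0 : ∀ s ω, 0 ≤ I s ω)
    (hIpos : ∀ s, 0 < ∑ ω, I s ω * πΩ s ω)
    (πI : S → Ω → ℝ)
    (hπI : ∀ s ω, πI s ω = I s ω * πΩ s ω / ∑ ω', I s ω' * πΩ s ω')
    (QU : ℝ → S → Ω → A → ℝ) (QΩ : ℝ → S → Ω → ℝ)
    (hQΩ : ∀ θ s ω, QΩ θ s ω = ∑ a, π θ ω s a * QU θ s ω a)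
    (hQU : ∀ θ s ω a, QU θ s ω a = r s a + γ * ∑ s', P s a s' *
      ((1 - β ω s') * QΩ θ s' ω + β ω s' * ∑ ω', πI s' ω' * QΩ θ s' ω'))
    (P₁ : ℝ → Matrix (S × Ω) (S × Ω) ℝ)
    (hP₁ : ∀ θ s ω s' ω', P₁ θ (s, ω) (s', ω') =
      ∑ a, π θ ω s a * P s a s' *
        ((1 - β ω s') * (if ω' = ω then 1 else 0) + β ω s' * πI s' ω')) :
    ∀ θ s ω,
      deriv (fun θ => QΩ θ s ω) θ =
        ∑ x : S × Ω, (∑' t : ℕ, γ ^ t * (P₁ θ ^ t) (s, ω) x) *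
          ∑ a, deriv (fun θ => π θ x.2 x.1 a) θ * QU θ x.1 x.2 a :=
  intra_option_policy_gradient_under_interest_policy_general r P hP0 hP1 γ hγ0 hγ1 π hπdiff hπ0 hπ1
    β hβ0 hβ1 πΩ hπΩ0 I hI0 hIpos πI hπI QU QΩ hQΩ hQU P₁ hP₁
end
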